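/- arXiv:0901.2998 — 4 statements merged into one kernel-verified Lean document; each statement's English description precedes it below -/
import Mathlib

section
/- Let I be a real prime ideal in ℝ[x₁,…,xₙ] (i.e., for all f₁,…,f_m ∈ ℝ[x], Σ fᵢ² ∈ I implies each fᵢ ∈ I), with I ≠ ℝ[x]. Then the extension ideal I' = ℂ[x]·I (the ideal of ℂ[x₁,…,xₙ] generated by the image of I under coefficient inclusion ℝ → ℂ) is a prime ideal of ℂ[x₁,…,xₙ]. -/
open MvPolynomial

noncomputable section

/-- An ideal of the real polynomial ring is real if whenever a finite sum of squares
lies in it, each summand lies in it. -/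
def IsRealIdeal {n : ℕ} (I : Ideal (MvPolynomial (Fin n) ℝ)) : Prop :=
  ∀ (m : ℕ) (f : Fin m → MvPolynomial (Fin n) ℝ),
    (∑ i, f i ^ 2) ∈ I → ∀ i, f i ∈ I

/-- Rank of the Jacobian matrix of a family of polynomials at a point. -/
def jacRank {K : Type*} [Field K] {n m : ℕ} (f : Fin m → MvPolynomial (Fin n) K)
    (a : Fin n → K) : ℕ :=
  (Matrix.of fun i j => MvPolynomial.eval a (MvPolynomial.pderiv j (f i))).rank

/-- `r` is the rank of the ideal `I` with generating family `f`: the maximal Jacobian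
rank over the points of the real zero set of `I`. -/
def IsJacobianRankOf {K : Type*} [Field K] {n m : ℕ} (f : Fin m → MvPolynomial (Fin n) K)
    (I : Ideal (MvPolynomial (Fin n) K)) (r : ℕ) : Prop :=
  (∃ a ∈ MvPolynomial.zeroLocus K I, jacRank f a = r) ∧
    ∀ a ∈ MvPolynomial.zeroLocus K I, jacRank f a ≤ r

/-- `V` has a point with a neighborhood (in `V`) homeomorphic to an open subset of `ℝ^d`. -/
def HasLocalDim {n : ℕ} (V : Set (Fin n → ℝ)) (d : ℕ) : Prop :=
  ∃ x ∈ V, ∃ U : Set (Fin n → ℝ), IsOpen U ∧ x ∈ U ∧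
    ∃ W : Set (Fin d → ℝ), IsOpen W ∧ Nonempty (↥(V ∩ U) ≃ₜ ↥W)

/-- The topological dimension of `V ⊆ ℝⁿ` equals `d` (with `dim ∅ = -1`). -/
def TopDimEq {n : ℕ} (V : Set (Fin n → ℝ)) (d : ℤ) : Prop :=
  (V = ∅ ∧ d = -1) ∨
  (∃ m : ℕ, d = (m : ℤ) ∧ HasLocalDim V m ∧ ∀ m' : ℕ, HasLocalDim V m' → m' ≤ m)

/-- A semialgebraic set: a finite union of finite intersections of sets of the form
`{g > 0}`, `{g ≥ 0}`, `{g = 0}`. -/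
def IsSemialgebraic {n : ℕ} (S : Set (Fin n → ℝ)) : Prop :=
  ∃ (s : ℕ) (r : Fin s → ℕ) (g : (i : Fin s) → Fin (r i) → MvPolynomial (Fin n) ℝ)
    (c : (i : Fin s) → Fin (r i) → Fin 3),
    S = ⋃ i, ⋂ j, {x | (c i j = 0 → MvPolynomial.eval x (g i j) > 0) ∧
      (c i j = 1 → MvPolynomial.eval x (g i j) ≥ 0) ∧
      (c i j = 2 → MvPolynomial.eval x (g i j) = 0)}

/-!
Write `F ∈ ℂ[x]` uniquely as `p + i q` with `p, q ∈ ℝ[x]`; the extension of `I` is then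
`{p + i q | p, q ∈ I}`. If `(a + i b)(c + i d)` lies in it, multiplying by the conjugate
`a - i b` shows `(a² + b²) c, (a² + b²) d ∈ I`. For a real ideal, `a² + b² ∈ I` forces `a, b ∈ I`;
otherwise primality of `I` gives `c, d ∈ I`.
-/

namespace MvPolynomial

variable {σ : Type*}

def rePart (F : MvPolynomial σ ℂ) : MvPolynomial σ ℝ :=
  AddMonoidAlgebra.map Complex.reAddGroupHom F

def imPart (F : MvPolynomial σ ℂ) : MvPolynomial σ ℝ :=
  AddMonoidAlgebra.map Complex.imAddGroupHom F

def ofReIm (p q : MvPolynomial σ ℝ) : MvPolynomial σ ℂ :=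
  map (algebraMap ℝ ℂ) p + C Complex.I * map (algebraMap ℝ ℂ) q

@[simp]
lemma coeff_rePart (F : MvPolynomial σ ℂ) (m : σ →₀ ℕ) : coeff m F.rePart = (coeff m F).re :=
  rfl

@[simp]
lemma coeff_imPart (F : MvPolynomial σ ℂ) (m : σ →₀ ℕ) : coeff m F.imPart = (coeff m F).im :=
  rfl

@[simp]
lemma rePart_ofReIm (p q : MvPolynomial σ ℝ) : (ofReIm p q).rePart = p := by
  ext m; simp [ofReIm, coeff_map]

@[simp]
lemma imPart_ofReIm (p q : MvPolynomial σ ℝ) : (ofReIm p q).imPart = q := by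
  ext m; simp [ofReIm, coeff_map]

@[simp]
lemma ofReIm_rePart_imPart (F : MvPolynomial σ ℂ) : ofReIm F.rePart F.imPart = F := by
  ext m; simp [ofReIm, coeff_map, Complex.ext_iff]

lemma ofReIm_mul_ofReIm (a b c d : MvPolynomial σ ℝ) :
    ofReIm a b * ofReIm c d = ofReIm (a * c - b * d) (a * d + b * c) := by
  have hI : (C Complex.I * C Complex.I : MvPolynomial σ ℂ) = -1 := by
    rw [← C_mul, Complex.I_mul_I, C_neg, C_1]
  simp only [ofReIm, map_sub, map_add, map_mul]
  linear_combination map (algebraMap ℝ ℂ) b * map (algebraMap ℝ ℂ) d * hI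

@[simp]
lemma rePart_add (F G : MvPolynomial σ ℂ) : (F + G).rePart = F.rePart + G.rePart := by
  ext m; simp

@[simp]
lemma imPart_add (F G : MvPolynomial σ ℂ) : (F + G).imPart = F.imPart + G.imPart := by
  ext m; simp

@[simp]
lemma rePart_map (p : MvPolynomial σ ℝ) : (map (algebraMap ℝ ℂ) p).rePart = p := by
  ext m; simp [coeff_map]

@[simp]
lemma imPart_map (p : MvPolynomial σ ℝ) : (map (algebraMap ℝ ℂ) p).imPart = 0 := by
  ext m; simp [coeff_map]

lemma rePart_mul (F G : MvPolynomial σ ℂ) :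
    (F * G).rePart = F.rePart * G.rePart - F.imPart * G.imPart := by
  rw [← ofReIm_rePart_imPart F, ← ofReIm_rePart_imPart G, ofReIm_mul_ofReIm]
  simp only [rePart_ofReIm, imPart_ofReIm]

lemma imPart_mul (F G : MvPolynomial σ ℂ) :
    (F * G).imPart = F.rePart * G.imPart + F.imPart * G.rePart := by
  rw [← ofReIm_rePart_imPart F, ← ofReIm_rePart_imPart G, ofReIm_mul_ofReIm]
  simp only [rePart_ofReIm, imPart_ofReIm]

def complexExtension (I : Ideal (MvPolynomial σ ℝ)) : Ideal (MvPolynomial σ ℂ) where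
  carrier := {F | F.rePart ∈ I ∧ F.imPart ∈ I}
  zero_mem' := by simp [rePart, imPart]
  add_mem' := by
    rintro F G ⟨hFre, hFim⟩ ⟨hGre, hGim⟩
    simpa only [Set.mem_ofPred_eq, rePart_add, imPart_add] using
      ⟨I.add_mem hFre hGre, I.add_mem hFim hGim⟩
  smul_mem' := by
    rintro c F ⟨hre, him⟩
    rw [smul_eq_mul, Set.mem_ofPred_eq, rePart_mul, imPart_mul]
    exact ⟨I.sub_mem (I.mul_mem_left _ hre) (I.mul_mem_left _ him),
      I.add_mem (I.mul_mem_left _ him) (I.mul_mem_left _ hre)⟩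

@[simp]
lemma mem_complexExtension {I : Ideal (MvPolynomial σ ℝ)} {F : MvPolynomial σ ℂ} :
    F ∈ complexExtension I ↔ F.rePart ∈ I ∧ F.imPart ∈ I :=
  Iff.rfl

lemma map_algebraMap_eq_complexExtension (I : Ideal (MvPolynomial σ ℝ)) :
    I.map (map (algebraMap ℝ ℂ)) = complexExtension I := by
  refine le_antisymm (Ideal.map_le_iff_le_comap.mpr fun p hp => ?_) fun F ⟨hre, him⟩ => ?_
  · simpa using hp
  · rw [← ofReIm_rePart_imPart F]
    exact Ideal.add_mem _ (Ideal.mem_map_of_mem _ hre)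
      (Ideal.mul_mem_left _ _ (Ideal.mem_map_of_mem _ him))

lemma isPrime_complexExtension {I : Ideal (MvPolynomial σ ℝ)} (hI : I.IsPrime)
    (hsq : ∀ p q, p ^ 2 + q ^ 2 ∈ I → p ∈ I ∧ q ∈ I) : (complexExtension I).IsPrime := by
  refine ⟨fun htop => hI.one_notMem ?_, fun {F G} hFG => ?_⟩
  · have h1 : (1 : MvPolynomial σ ℂ) ∈ complexExtension I := htop ▸ Submodule.mem_top
    rw [← map_one (map (algebraMap ℝ ℂ)), mem_complexExtension, rePart_map] at h1
    exact h1.1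
  obtain ⟨hre, him⟩ : (F * G).rePart ∈ I ∧ (F * G).imPart ∈ I := hFG
  rw [rePart_mul] at hre
  rw [imPart_mul] at him
  set a := F.rePart; set b := F.imPart; set c := G.rePart; set d := G.imPart
  by_cases hab : a ^ 2 + b ^ 2 ∈ I
  · exact Or.inl (hsq a b hab)
  have hc : (a ^ 2 + b ^ 2) * c ∈ I := by
    rw [show (a ^ 2 + b ^ 2) * c = a * (a * c - b * d) + b * (a * d + b * c) by ring]
    exact I.add_mem (I.mul_mem_left a hre) (I.mul_mem_left b him)
  have hd : (a ^ 2 + b ^ 2) * d ∈ I := by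
    rw [show (a ^ 2 + b ^ 2) * d = a * (a * d + b * c) - b * (a * c - b * d) by ring]
    exact I.sub_mem (I.mul_mem_left a him) (I.mul_mem_left b hre)
  exact Or.inr ⟨(hI.mem_or_mem hc).resolve_left hab, (hI.mem_or_mem hd).resolve_left hab⟩

end MvPolynomial

lemma IsRealIdeal.mem_of_sq_add_sq_mem {n : ℕ} {I : Ideal (MvPolynomial (Fin n) ℝ)}
    (hI : IsRealIdeal I) {p q : MvPolynomial (Fin n) ℝ} (h : p ^ 2 + q ^ 2 ∈ I) :
    p ∈ I ∧ q ∈ I := by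
  have hsum : ∑ i, ![p, q] i ^ 2 ∈ I := by simpa [Fin.sum_univ_two] using h
  exact ⟨by simpa using hI 2 ![p, q] hsum 0, by simpa using hI 2 ![p, q] hsum 1⟩

theorem real_prime_extension_isPrime_general {n : ℕ} (I : Ideal (MvPolynomial (Fin n) ℝ))
    (hprime : I.IsPrime) (hreal : IsRealIdeal I) :
    (Ideal.map (MvPolynomial.map (algebraMap ℝ ℂ)) I).IsPrime := by
  rw [map_algebraMap_eq_complexExtension]
  exact isPrime_complexExtension hprime fun _ _ => hreal.mem_of_sq_add_sq_mem

/-- If `I` is a real prime ideal of `ℝ[x]`, then its extension to `ℂ[x]` is prime. -/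
theorem real_prime_extension_isPrime {n : ℕ} (I : Ideal (MvPolynomial (Fin n) ℝ))
    (hprime : I.IsPrime) (hne : I ≠ ⊤) (hreal : IsRealIdeal I) :
    (Ideal.map (MvPolynomial.map (algebraMap ℝ ℂ)) I).IsPrime :=
  real_prime_extension_isPrime_general I hprime hreal
end
end

section
/- Let I = I₁ ∩ ⋯ ∩ I_k be a primary decomposition of an ideal I in ℝ[x₁,…,xₙ]. Then I is real if and only if each Iₜ is a real prime ideal. -/
open MvPolynomial

noncomputable section

/-! If `I = ⋂ₛ Jₛ` is real and `g` lies in every component but `Jₜ`, then `g ∉ √Jₜ`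
(else some `g ^ (m + 1)` lies in `I`, hence `g ∈ I ⊆ Jₜ`), and multiplying a sum of squares
in `Jₜ` by `g²` lands it in `I`. Reality of `I` and primality of `Jₜ` then show that `Jₜ` is
real, hence radical, hence prime. The converse holds because intersections of real ideals
are real. -/

namespace Ideal

variable {R ι : Type*} [CommRing R] {J : ι → Ideal R} {t : ι} {g : R}

theorem mul_mem_iInf_of_forall_ne_mem (hg : ∀ s ≠ t, g ∈ J s) {y : R} (hy : y ∈ J t) :
    g * y ∈ ⨅ s, J s :=
  mem_iInf.mpr fun s => by
    by_cases hst : s = t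
    · exact hst ▸ (J t).mul_mem_left g hy
    · exact (J s).mul_mem_right y (hg s hst)

theorem notMem_radical_of_isRadical_iInf (hrad : (⨅ s, J s).IsRadical)
    (hg : ∀ s ≠ t, g ∈ J s) (hgt : g ∉ J t) : g ∉ (J t).radical := by
  rintro ⟨m, hm⟩
  have hpow : g ^ (m + 1) ∈ ⨅ s, J s := pow_succ' g m ▸ mul_mem_iInf_of_forall_ne_mem hg hm
  exact hgt (mem_iInf.mp (hrad ⟨m + 1, hpow⟩) t)

end Ideal

namespace IsRealIdeal

variable {n : ℕ} {I Q : Ideal (MvPolynomial (Fin n) ℝ)}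

theorem sq_mem (hI : IsRealIdeal I) {f : MvPolynomial (Fin n) ℝ} (hf : f ^ 2 ∈ I) : f ∈ I :=
  hI 1 (fun _ => f) (by simpa using hf) 0

theorem isRadical (hI : IsRealIdeal I) : I.IsRadical :=
  (Ideal.isRadical_iff_pow_one_lt 2 one_lt_two).mpr fun _ => hI.sq_mem

theorem isPrime_of_isPrimary (hQ : IsRealIdeal Q) (hprim : Q.IsPrimary) : Q.IsPrime :=
  Ideal.radical_eq_iff.mpr hQ.isRadical ▸ Ideal.isPrime_radical hprim

theorem iInf {ι : Type*} {J : ι → Ideal (MvPolynomial (Fin n) ℝ)}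
    (hJ : ∀ t, IsRealIdeal (J t)) : IsRealIdeal (⨅ t, J t) := fun m f hf i =>
  Ideal.mem_iInf.mpr fun t => hJ t m f (Ideal.mem_iInf.mp hf t) i

theorem of_isPrimary {g : MvPolynomial (Fin n) ℝ} (hI : IsRealIdeal I) (hprim : Q.IsPrimary)
    (hIQ : I ≤ Q) (hg : g ∉ Q.radical) (hgQ : ∀ y ∈ Q, g * y ∈ I) : IsRealIdeal Q := by
  intro m f hf i
  have hsum : ∑ j, (g * f j) ^ 2 ∈ I := by
    have hexp : ∑ j, (g * f j) ^ 2 = g * (g * ∑ j, f j ^ 2) := by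
      rw [← mul_assoc, Finset.mul_sum]
      exact Finset.sum_congr rfl fun j _ => by ring
    exact hexp ▸ I.mul_mem_left g (hgQ _ hf)
  have hgf : f i * g ∈ Q := mul_comm g (f i) ▸ hIQ (hI m _ hsum i)
  exact ((Ideal.isPrimary_iff.mp hprim).2 hgf).resolve_right hg

end IsRealIdeal

/-- Given an irredundant primary decomposition `I = I₁ ∩ ⋯ ∩ I_k`, the ideal `I`
is real iff each `Iₜ` is a real prime ideal. -/
theorem isRealIdeal_iff_primary_components {n k : ℕ}
    (I : Ideal (MvPolynomial (Fin n) ℝ)) (J : Fin k → Ideal (MvPolynomial (Fin n) ℝ))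
    (hdec : I = ⨅ t, J t) (hprimary : ∀ t, (J t).IsPrimary)
    (hirr : ∀ t, ¬ (⨅ s ∈ ({t}ᶜ : Set (Fin k)), J s) ≤ J t) :
    IsRealIdeal I ↔ ∀ t, (J t).IsPrime ∧ IsRealIdeal (J t) := by
  subst hdec
  refine ⟨fun hI t => ?_, fun hJ => IsRealIdeal.iInf fun t => (hJ t).2⟩
  obtain ⟨g, hg, hgt⟩ := SetLike.not_le_iff_exists.mp (hirr t)
  have hgs : ∀ s ≠ t, g ∈ J s := fun s hs => Ideal.mem_iInf.mp (Ideal.mem_iInf.mp hg s) hs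
  have hreal : IsRealIdeal (J t) :=
    hI.of_isPrimary (hprimary t) (iInf_le J t)
      (Ideal.notMem_radical_of_isRadical_iInf hI.isRadical hgs hgt)
      fun _ => Ideal.mul_mem_iInf_of_forall_ne_mem hgs
  exact ⟨hreal.isPrime_of_isPrimary (hprimary t), hreal⟩
end
end

section
/- Let I be a prime ideal of ℝ[x₁,…,xₙ] such that the extension I' = ℂ[x]·I is not prime in ℂ[x₁,…,xₙ]. Then there exist polynomials a, b ∈ ℝ[x] with a ∉ I and b ∉ I such that a² + b² ∈ I; in particular I is not real. -/
open MvPolynomial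

noncomputable section

/-!
Every complex polynomial is uniquely `a + i b` with `a, b` real, and `a + i b` lies in the
extension of `I` exactly when `a, b ∈ I`. A product `(a + i b)(c + i d)` lying in the extension
therefore gives `ac - bd, ad + bc ∈ I`, hence `(a² + b²)(c² + d²) = (ac - bd)² + (ad + bc)² ∈ I`.
By primality one factor, say `a² + b²`, lies in `I`; then `a ∈ I ↔ b ∈ I`, and since `a + i b`
is not in the extension, neither `a` nor `b` is in `I`.
-/

theorem Ideal.IsRadical.mem_iff_mem_of_sq_add_sq_mem {R : Type*} [CommRing R] {I : Ideal R}
    (hI : I.IsRadical) {a b : R} (hab : a ^ 2 + b ^ 2 ∈ I) : a ∈ I ↔ b ∈ I := by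
  have right_mem {x y : R} (hxy : x ^ 2 + y ^ 2 ∈ I) (hx : x ∈ I) : y ∈ I :=
    hI ⟨2, by simpa using I.sub_mem hxy (I.pow_mem_of_mem hx 2 two_pos)⟩
  exact ⟨right_mem hab, right_mem (add_comm (a ^ 2) _ ▸ hab)⟩

theorem not_isRealIdeal_of_sq_add_sq_mem {n : ℕ} {I : Ideal (MvPolynomial (Fin n) ℝ)}
    {a b : MvPolynomial (Fin n) ℝ} (ha : a ∉ I) (hab : a ^ 2 + b ^ 2 ∈ I) : ¬ IsRealIdeal I :=
  fun hreal => ha (hreal 2 ![a, b] (by simpa [Fin.sum_univ_two] using hab) 0)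

namespace MvPolynomial

variable {σ : Type*}

local notation "φ" => MvPolynomial.map (algebraMap ℝ ℂ)

theorem exists_eq_map_add_I_mul_map (p : MvPolynomial σ ℂ) :
    ∃ a b : MvPolynomial σ ℝ, p = φ a + C Complex.I * φ b := by
  induction p using MvPolynomial.induction_on with
  | C z =>
    refine ⟨C z.re, C z.im, ?_⟩
    simp only [map_C, ← C_mul, ← C_add, Complex.coe_algebraMap, mul_comm Complex.I,
      Complex.re_add_im]
  | add p q hp hq =>
    obtain ⟨a, b, rfl⟩ := hp
    obtain ⟨c, d, rfl⟩ := hq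
    exact ⟨a + c, b + d, by simp only [map_add]; ring⟩
  | mul_X p i hp =>
    obtain ⟨a, b, rfl⟩ := hp
    exact ⟨a * X i, b * X i, by simp only [map_mul, map_X]; ring⟩

theorem eq_and_eq_of_map_add_I_mul_map_eq {a b c d : MvPolynomial σ ℝ}
    (h : φ a + C Complex.I * φ b = φ c + C Complex.I * φ d) : a = c ∧ b = d := by
  have hm (m : σ →₀ ℕ) : coeff m a = coeff m c ∧ coeff m b = coeff m d := by
    simpa [coeff_map, Complex.ext_iff] using congrArg (coeff m) h
  exact ⟨ext _ _ fun m => (hm m).1, ext _ _ fun m => (hm m).2⟩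

theorem map_add_I_mul_map_mul (a b c d : MvPolynomial σ ℝ) :
    (φ a + C Complex.I * φ b) * (φ c + C Complex.I * φ d) =
      φ (a * c - b * d) + C Complex.I * φ (a * d + b * c) := by
  have hI : (C Complex.I : MvPolynomial σ ℂ) * C Complex.I = -1 := by
    rw [← C_mul, Complex.I_mul_I, map_neg, map_one]
  simp only [map_mul, map_sub, map_add]
  linear_combination φ b * φ d * hI

variable {I : Ideal (MvPolynomial σ ℝ)}

theorem exists_mem_eq_map_add_I_mul_map {p : MvPolynomial σ ℂ} (hp : p ∈ I.map φ) :
    ∃ a ∈ I, ∃ b ∈ I, p = φ a + C Complex.I * φ b := by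
  let J : Ideal (MvPolynomial σ ℂ) :=
    { carrier := {p | ∃ a ∈ I, ∃ b ∈ I, p = φ a + C Complex.I * φ b}
      zero_mem' := ⟨0, I.zero_mem, 0, I.zero_mem, by simp⟩
      add_mem' := by
        rintro _ _ ⟨a, ha, b, hb, rfl⟩ ⟨c, hc, d, hd, rfl⟩
        exact ⟨a + c, I.add_mem ha hc, b + d, I.add_mem hb hd, by simp only [map_add]; ring⟩
      smul_mem' := by
        rintro r _ ⟨a, ha, b, hb, rfl⟩
        obtain ⟨u, v, rfl⟩ := exists_eq_map_add_I_mul_map r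
        exact ⟨u * a - v * b, I.sub_mem (I.mul_mem_left u ha) (I.mul_mem_left v hb),
          u * b + v * a, I.add_mem (I.mul_mem_left u hb) (I.mul_mem_left v ha),
          map_add_I_mul_map_mul u v a b⟩ }
  have hIJ : I.map φ ≤ J :=
    Ideal.map_le_iff_le_comap.mpr fun a ha => ⟨a, ha, 0, I.zero_mem, by simp⟩
  exact hIJ hp

theorem map_add_I_mul_map_mem_map_iff {a b : MvPolynomial σ ℝ} :
    φ a + C Complex.I * φ b ∈ I.map φ ↔ a ∈ I ∧ b ∈ I := by
  refine ⟨fun h => ?_, fun ⟨ha, hb⟩ =>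
    add_mem (Ideal.mem_map_of_mem _ ha) (Ideal.mul_mem_left _ _ (Ideal.mem_map_of_mem _ hb))⟩
  obtain ⟨a', ha', b', hb', h⟩ := exists_mem_eq_map_add_I_mul_map h
  obtain ⟨rfl, rfl⟩ := eq_and_eq_of_map_add_I_mul_map_eq h
  exact ⟨ha', hb'⟩

theorem comap_map_algebraMap_real_complex (I : Ideal (MvPolynomial σ ℝ)) :
    (I.map φ).comap φ = I := by
  ext a
  simpa using map_add_I_mul_map_mem_map_iff (I := I) (a := a) (b := 0)

theorem exists_sq_add_sq_mem_of_not_isPrime_map (hI : I.IsPrime) (hmap : ¬ (I.map φ).IsPrime) :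
    ∃ a b : MvPolynomial σ ℝ, a ∉ I ∧ b ∉ I ∧ a ^ 2 + b ^ 2 ∈ I := by
  have witness {a b : MvPolynomial σ ℝ} (hab : a ^ 2 + b ^ 2 ∈ I) (hnot : ¬ (a ∈ I ∧ b ∈ I)) :
      ∃ a b : MvPolynomial σ ℝ, a ∉ I ∧ b ∉ I ∧ a ^ 2 + b ^ 2 ∈ I := by
    have hiff := hI.isRadical.mem_iff_mem_of_sq_add_sq_mem hab
    exact ⟨a, b, fun ha => hnot ⟨ha, hiff.mp ha⟩, fun hb => hnot ⟨hiff.mpr hb, hb⟩, hab⟩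
  rcases Ideal.not_isPrime_iff.mp hmap with htop | ⟨f, hf, g, hg, hfg⟩
  · refine absurd ?_ hI.ne_top
    rw [← comap_map_algebraMap_real_complex I, htop, Ideal.comap_top]
  obtain ⟨a, b, rfl⟩ := exists_eq_map_add_I_mul_map f
  obtain ⟨c, d, rfl⟩ := exists_eq_map_add_I_mul_map g
  rw [map_add_I_mul_map_mem_map_iff] at hf hg
  rw [map_add_I_mul_map_mul, map_add_I_mul_map_mem_map_iff] at hfg
  have hprod : (a ^ 2 + b ^ 2) * (c ^ 2 + d ^ 2) ∈ I := by
    rw [show (a ^ 2 + b ^ 2) * (c ^ 2 + d ^ 2) = (a * c - b * d) ^ 2 + (a * d + b * c) ^ 2 by ring]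
    exact add_mem (I.pow_mem_of_mem hfg.1 2 two_pos) (I.pow_mem_of_mem hfg.2 2 two_pos)
  rcases hI.mem_or_mem hprod with hab | hcd
  · exact witness hab hf
  · exact witness hcd hg

end MvPolynomial

/-- If `I` is prime in `ℝ[x]` but its extension to `ℂ[x]` is not prime, then there are
`a, b ∉ I` with `a² + b² ∈ I`; in particular `I` is not real. -/
theorem exists_sum_sq_of_extension_not_prime {n : ℕ}
    (I : Ideal (MvPolynomial (Fin n) ℝ)) (hprime : I.IsPrime)
    (hnot : ¬ (Ideal.map (MvPolynomial.map (algebraMap ℝ ℂ)) I).IsPrime) :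
    (∃ a b : MvPolynomial (Fin n) ℝ, a ∉ I ∧ b ∉ I ∧ a ^ 2 + b ^ 2 ∈ I) ∧
      ¬ IsRealIdeal I := by
  obtain ⟨a, b, ha, hb, hab⟩ := exists_sq_add_sq_mem_of_not_isPrime_map hprime hnot
  exact ⟨⟨a, b, ha, hb, hab⟩, not_isRealIdeal_of_sq_add_sq_mem ha hab⟩
end
end

section
/- The ideal J = ⟨y² − xz, x³ − yz, x²y − z²⟩ in ℝ[x, y, z] satisfies 𝓥(J) ⊇ {(t³, t⁴, t⁵) : t ∈ ℝ}, and the vanishing ideal of the curve {(t³, t⁴, t⁵) : t ∈ ℝ} equals J; in particular J is a real prime ideal. -/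
open MvPolynomial

noncomputable section

/-!
Let `φ : ℝ[x,y,z] → ℝ[t]` be the parametrisation `x ↦ t³, y ↦ t⁴, z ↦ t⁵`. Modulo `J` every
polynomial reduces to `p(x) + y q(x) + z r(x)`, whose image `p(t³) + t⁴ q(t³) + t⁵ r(t³)` has its
three summands supported in distinct residue classes mod 3; so only the zero normal form lies in
`ker φ`, and `J = ker φ` is prime. Since `ℝ` is infinite, `ker φ` is the vanishing ideal `𝓘(C)`
of the curve `C`, and then `𝓘(𝓥(J)) = 𝓘(𝓥(𝓘(C))) = 𝓘(C) = J`.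
-/

namespace MvPolynomial

theorem vanishingIdeal_zeroLocus_vanishingIdeal {k σ : Type*} [Field k] (V : Set (σ → k)) :
    vanishingIdeal k (zeroLocus k (vanishingIdeal k V)) = vanishingIdeal k V :=
  le_antisymm (vanishingIdeal_anti_mono (zeroLocus_vanishingIdeal_le V))
    (le_vanishingIdeal_zeroLocus _)

end MvPolynomial

namespace Polynomial

variable {R : Type*} [CommSemiring R]

theorem coeff_X_pow_mul_expand_mul_add (p : R[X]) {q : ℕ} (hq : 0 < q) (m k : ℕ) :
    (X ^ m * expand R q p).coeff (q * k + m) = p.coeff k := by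
  rw [X_pow_mul, coeff_mul_X_pow, coeff_expand_mul' hq]

theorem coeff_X_pow_mul_expand_eq_zero (p : R[X]) {q : ℕ} (hq : 0 < q) {m n : ℕ}
    (h : m ≤ n → ¬q ∣ n - m) : (X ^ m * expand R q p).coeff n = 0 := by
  rw [X_pow_mul, coeff_mul_X_pow']
  split_ifs with hmn
  · rw [coeff_expand hq, if_neg (h hmn)]
  · rfl

end Polynomial

open Polynomial (expand)

section CommSemiring

variable (R : Type*) [CommSemiring R]

def monomialCurveMap : MvPolynomial (Fin 3) R →ₐ[R] Polynomial R :=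
  aeval ![Polynomial.X ^ 3, Polynomial.X ^ 4, Polynomial.X ^ 5]

def monomialCurve : Set (Fin 3 → R) :=
  {p | ∃ t : R, p 0 = t ^ 3 ∧ p 1 = t ^ 4 ∧ p 2 = t ^ 5}

variable {R}

def curveNormalForm (p q r : Polynomial R) : MvPolynomial (Fin 3) R :=
  Polynomial.aeval (X 0) p + X 1 * Polynomial.aeval (X 0) q + X 2 * Polynomial.aeval (X 0) r

@[simp] theorem monomialCurveMap_X_zero : monomialCurveMap R (X 0) = Polynomial.X ^ 3 := by
  simp [monomialCurveMap]

@[simp] theorem monomialCurveMap_X_one : monomialCurveMap R (X 1) = Polynomial.X ^ 4 := by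
  simp [monomialCurveMap]

@[simp] theorem monomialCurveMap_X_two : monomialCurveMap R (X 2) = Polynomial.X ^ 5 := by
  simp [monomialCurveMap]

theorem monomialCurveMap_aeval_X_zero (p : Polynomial R) :
    monomialCurveMap R (Polynomial.aeval (X 0) p) = expand R 3 p := by
  rw [← Polynomial.aeval_algHom_apply, monomialCurveMap_X_zero, Polynomial.expand]
  rfl

theorem monomialCurveMap_curveNormalForm (p q r : Polynomial R) :
    monomialCurveMap R (curveNormalForm p q r) =
      expand R 3 p + Polynomial.X ^ 4 * expand R 3 q + Polynomial.X ^ 5 * expand R 3 r := by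
  simp [curveNormalForm, monomialCurveMap_aeval_X_zero]

open Polynomial in
theorem eq_zero_of_monomialCurveMap_curveNormalForm_eq_zero {p q r : Polynomial R}
    (h : monomialCurveMap R (curveNormalForm p q r) = 0) : p = 0 ∧ q = 0 ∧ r = 0 := by
  rw [monomialCurveMap_curveNormalForm] at h
  have hc (n : ℕ) : (Polynomial.X ^ 0 * expand R 3 p).coeff n +
      (Polynomial.X ^ 4 * expand R 3 q).coeff n +
      (Polynomial.X ^ 5 * expand R 3 r).coeff n = 0 := by
    simpa using congrArg (·.coeff n) h
  refine ⟨ext fun k => ?_, ext fun k => ?_, ext fun k => ?_⟩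
  · have := hc (3 * k + 0)
    rw [coeff_X_pow_mul_expand_mul_add _ three_pos,
      coeff_X_pow_mul_expand_eq_zero _ three_pos (by omega),
      coeff_X_pow_mul_expand_eq_zero _ three_pos (by omega)] at this
    simpa using this
  · have := hc (3 * k + 4)
    rw [coeff_X_pow_mul_expand_eq_zero _ three_pos (by omega),
      coeff_X_pow_mul_expand_mul_add _ three_pos,
      coeff_X_pow_mul_expand_eq_zero _ three_pos (by omega)] at this
    simpa using this
  · have := hc (3 * k + 5)
    rw [coeff_X_pow_mul_expand_eq_zero _ three_pos (by omega),
      coeff_X_pow_mul_expand_eq_zero _ three_pos (by omega),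
      coeff_X_pow_mul_expand_mul_add _ three_pos] at this
    simpa using this

theorem monomialCurve_eq_range :
    monomialCurve R = Set.range fun t : R => ![t ^ 3, t ^ 4, t ^ 5] := by
  ext x
  refine ⟨fun ⟨t, h₀, h₁, h₂⟩ => ⟨t, ?_⟩, fun ⟨t, hx⟩ => ⟨t, by simp [← hx]⟩⟩
  ext i
  fin_cases i <;> simp [h₀, h₁, h₂]

theorem aeval_monomialCurve_point (t : R) (f : MvPolynomial (Fin 3) R) :
    aeval ![t ^ 3, t ^ 4, t ^ 5] f = (monomialCurveMap R f).eval t := by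
  rw [monomialCurveMap, ← Polynomial.coe_aeval_eq_eval, comp_aeval_apply]
  congr 1
  ext i
  fin_cases i <;> simp

end CommSemiring

section CommRing

variable (R : Type*) [CommRing R]

def monomialCurveIdeal : Ideal (MvPolynomial (Fin 3) R) :=
  Ideal.span {X 1 ^ 2 - X 0 * X 2, X 0 ^ 3 - X 1 * X 2, X 0 ^ 2 * X 1 - X 2 ^ 2}

variable {R}

theorem monomialCurveIdeal_le_ker : monomialCurveIdeal R ≤ RingHom.ker (monomialCurveMap R) := by
  rw [monomialCurveIdeal, Ideal.span_le]
  rintro g (rfl | rfl | rfl) <;> simp <;> ring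

theorem exists_map_eq_map_curveNormalForm {S : Type*} [CommRing S]
    (π : MvPolynomial (Fin 3) R →+* S) (h₁ : π (X 1) ^ 2 = π (X 0) * π (X 2))
    (h₂ : π (X 0) ^ 3 = π (X 1) * π (X 2)) (h₃ : π (X 0) ^ 2 * π (X 1) = π (X 2) ^ 2)
    (f : MvPolynomial (Fin 3) R) : ∃ p q r, π f = π (curveNormalForm p q r) := by
  simp only [curveNormalForm, map_add, map_mul]
  induction f using MvPolynomial.induction_on with
  | C a => exact ⟨Polynomial.C a, 0, 0, by simp⟩
  | add f g hf hg =>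
    obtain ⟨p, q, r, hf⟩ := hf
    obtain ⟨p', q', r', hg⟩ := hg
    exact ⟨p + p', q + q', r + r', by simp only [map_add]; linear_combination hf + hg⟩
  | mul_X f i hf =>
    obtain ⟨p, q, r, hf⟩ := hf
    rw [map_mul]
    obtain rfl | rfl | rfl : i = 0 ∨ i = 1 ∨ i = 2 := by omega
    · exact ⟨Polynomial.X * p, Polynomial.X * q, Polynomial.X * r, by
        simp only [map_mul, Polynomial.aeval_X]; linear_combination π (X 0) * hf⟩
    · refine ⟨Polynomial.X ^ 3 * r, p, Polynomial.X * q, ?_⟩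
      simp only [map_mul, map_pow, Polynomial.aeval_X]
      linear_combination π (X 1) * hf + π (Polynomial.aeval (X 0) q) * h₁ -
        π (Polynomial.aeval (X 0) r) * h₂
    · refine ⟨Polynomial.X ^ 3 * q, Polynomial.X ^ 2 * r, p, ?_⟩
      simp only [map_mul, map_pow, Polynomial.aeval_X]
      linear_combination π (X 2) * hf - π (Polynomial.aeval (X 0) q) * h₂ -
        π (Polynomial.aeval (X 0) r) * h₃

theorem exists_sub_curveNormalForm_mem (f : MvPolynomial (Fin 3) R) :
    ∃ p q r, f - curveNormalForm p q r ∈ monomialCurveIdeal R := by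
  have rel {g h : MvPolynomial (Fin 3) R} (hgh : g - h ∈ ({X 1 ^ 2 - X 0 * X 2,
      X 0 ^ 3 - X 1 * X 2, X 0 ^ 2 * X 1 - X 2 ^ 2} : Set _)) :
      Ideal.Quotient.mk (monomialCurveIdeal R) g = Ideal.Quotient.mk _ h :=
    Ideal.Quotient.eq.mpr (Ideal.subset_span hgh)
  simp_rw [← Ideal.Quotient.eq]
  refine exists_map_eq_map_curveNormalForm _ ?_ ?_ ?_ f <;> simp only [← map_pow, ← map_mul] <;>
    exact rel (by simp)

theorem ker_monomialCurveMap : RingHom.ker (monomialCurveMap R) = monomialCurveIdeal R := by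
  refine le_antisymm (fun f hf => ?_) monomialCurveIdeal_le_ker
  obtain ⟨p, q, r, hmem⟩ := exists_sub_curveNormalForm_mem f
  have hnf : monomialCurveMap R (curveNormalForm p q r) = 0 := by
    simpa [RingHom.mem_ker.mp hf] using monomialCurveIdeal_le_ker hmem
  obtain ⟨rfl, rfl, rfl⟩ := eq_zero_of_monomialCurveMap_curveNormalForm_eq_zero hnf
  simpa [curveNormalForm] using hmem

end CommRing

theorem vanishingIdeal_monomialCurve (k : Type*) [Field k] [Infinite k] :
    vanishingIdeal k (monomialCurve k) = RingHom.ker (monomialCurveMap k) := by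
  ext f
  simp only [mem_vanishingIdeal_iff, monomialCurve_eq_range, Set.forall_mem_range,
    aeval_monomialCurve_point, RingHom.mem_ker]
  exact ⟨fun h => Polynomial.funext (by simpa using h), fun h t => by simp [h]⟩

/-- The ideal `J = ⟨y² - xz, x³ - yz, x²y - z²⟩` of `ℝ[x,y,z]` contains the curve
`{(t³, t⁴, t⁵)}` in its zero set, equals the vanishing ideal of that curve, and is a real
prime ideal. -/
theorem monomial_curve_ideal_real_prime (J : Ideal (MvPolynomial (Fin 3) ℝ))
    (hJ : J = Ideal.span
      {MvPolynomial.X 1 ^ 2 - MvPolynomial.X 0 * MvPolynomial.X 2,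
       MvPolynomial.X 0 ^ 3 - MvPolynomial.X 1 * MvPolynomial.X 2,
       MvPolynomial.X 0 ^ 2 * MvPolynomial.X 1 - MvPolynomial.X 2 ^ 2}) :
    {p : Fin 3 → ℝ | ∃ t : ℝ, p 0 = t ^ 3 ∧ p 1 = t ^ 4 ∧ p 2 = t ^ 5} ⊆
      MvPolynomial.zeroLocus ℝ J ∧
    MvPolynomial.vanishingIdeal ℝ
      {p : Fin 3 → ℝ | ∃ t : ℝ, p 0 = t ^ 3 ∧ p 1 = t ^ 4 ∧ p 2 = t ^ 5} = J ∧
    J.IsPrime ∧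
    MvPolynomial.vanishingIdeal ℝ (MvPolynomial.zeroLocus ℝ J) = J := by
  have hC : vanishingIdeal ℝ (monomialCurve ℝ) = J := by
    rw [vanishingIdeal_monomialCurve, ker_monomialCurveMap, hJ, monomialCurveIdeal]
  refine ⟨?_, hC, ?_, ?_⟩ <;> rw [← hC]
  · exact zeroLocus_vanishingIdeal_le _
  · rw [vanishingIdeal_monomialCurve]
    exact RingHom.ker_isPrime _
  · exact vanishingIdeal_zeroLocus_vanishingIdeal _
end
end
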